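/- Let (L, R) be a Reynolds Lie algebra over a field k and (V; ρ, R_V) a representation of it. Define ρ_R : L → End(V) by ρ_R(x)u := ρ(R x)u + R_V(ρ(R x)u − ρ(x)u). Then ρ_R is a representation of the Lie algebra (L, [·,·]_R), i.e. ρ_R([x,y]_R) = ρ_R(x)∘ρ_R(y) − ρ_R(y)∘ρ_R(x) for all x, y ∈ L. -/
import Mathlib


namespace ReynoldsInducedRep

variable {k L V : Type*} [Field k] [LieRing L] [LieAlgebra k L]
  [AddCommGroup V] [Module k V]

/-- The bracket `[x, y]_R := [x, R y] + [R x, y] - [R x, R y]` induced by a Reynolds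
operator. -/
def brR (R : L →ₗ[k] L) (x y : L) : L :=
  ⁅x, R y⁆ + ⁅R x, y⁆ - ⁅R x, R y⁆

/-- The induced action `ρ_R(x)u := ρ(R x)u + R_V(ρ(R x)u - ρ(x)u)`. -/
def rhoR (R : L →ₗ[k] L) (ρ : L →ₗ[k] Module.End k V) (RV : V →ₗ[k] V)
    (x : L) (v : V) : V :=
  ρ (R x) v + RV (ρ (R x) v - ρ x v)

/-- If `(V; ρ, R_V)` is a representation of a Reynolds Lie algebra `(L, R)`, then
`ρ_R` is a representation of the Lie algebra `(L, [·,·]_R)`. -/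
theorem rhoR_rep
    (R : L →ₗ[k] L)
    (hR : ∀ x y : L, ⁅R x, R y⁆ = R (⁅R x, y⁆ + ⁅x, R y⁆ - ⁅R x, R y⁆))
    (ρ : L →ₗ[k] Module.End k V)
    (hρ : ∀ (x y : L) (v : V), ρ ⁅x, y⁆ v = ρ x (ρ y v) - ρ y (ρ x v))
    (RV : V →ₗ[k] V)
    (hRV : ∀ (x : L) (u : V),
      ρ (R x) (RV u) = RV (ρ (R x) u + ρ x (RV u) - ρ (R x) (RV u))) :
    ∀ (x y : L) (v : V),
      rhoR R ρ RV (brR R x y) v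
        = rhoR R ρ RV x (rhoR R ρ RV y v) - rhoR R ρ RV y (rhoR R ρ RV x v) := by
  intro x y v
  have h3 : (⁅R x, R y⁆ : L) = R ⁅x, R y⁆ + R ⁅R x, y⁆ - R ⁅R x, R y⁆ := by
    conv_lhs => rw [hR x y]
    rw [map_sub, map_add]; abel
  have h1 := hRV x (ρ (R y) v - ρ y v)
  have h2 := hRV y (ρ (R x) v - ρ x v)
  have h4 := congrArg (fun z => ρ z v) h3
  have h5 := congrArg (fun z => RV (ρ z v)) h3
  simp only [rhoR, brR, map_add, map_sub, hρ, LinearMap.add_apply,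
    LinearMap.sub_apply] at h1 h2 h4 h5 ⊢
  linear_combination (norm := module) h2 - h1 - h4 - h5

end ReynoldsInducedRep
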